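/- Let F : ℝ → ℝ satisfy F(0)=0, F nondecreasing, and 0 ≤ F(w) ≤ 1 for all w ≥ 0. In the Prisoner's Dilemma with subjective utilities u'_i = a·u_i + a·F(w)·u_j (a > 0), the profile (C,C) is a pure-strategy Nash equilibrium if and only if F(w) ≥ w_min = (T−R)/(R−S), and (D,D) is a pure-strategy Nash equilibrium if and only if F(w) ≤ w_max = (P−S)/(T−P). Hence both are Nash equilibria exactly for those w with w_min ≤ F(w) ≤ w_max. -/

import Mathlib

/-- Pure strategies in the Prisoner's Dilemma. -/
inductive Strategy : Type
  | C : Strategy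
  | D : Strategy
deriving DecidableEq

open Strategy

/-- Objective payoff of the row player when she plays `s` against `t`:
`R` at (C,C), `P` at (D,D), `S` for the cooperator and `T` for the defector
at an asymmetric profile. -/
def payoff (T R P S : ℝ) : Strategy → Strategy → ℝ
  | C, C => R
  | C, D => S
  | D, C => T
  | D, D => P

/-- Subjective utility of a player who plays `s` against `t`:
`u'_i = a·u_i + b·u_j`. -/
def subj (T R P S a b : ℝ) (s t : Strategy) : ℝ :=
  a * payoff T R P S s t + b * payoff T R P S t s

/-- `(s, t)` is a pure-strategy Nash equilibrium of the subjective game: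
no player can strictly increase her subjective utility by a unilateral deviation. -/
def IsNash (T R P S a b : ℝ) (s t : Strategy) : Prop :=
  (∀ s' : Strategy, subj T R P S a b s' t ≤ subj T R P S a b s t) ∧
  (∀ t' : Strategy, subj T R P S a b t' s ≤ subj T R P S a b t s)

theorem Strategy.forall_strategy {p : Strategy → Prop} : (∀ s, p s) ↔ p C ∧ p D :=
  ⟨fun h => ⟨h C, h D⟩, fun ⟨hC, hD⟩ s => by cases s <;> assumption⟩

theorem isNash_self_iff {T R P S a b : ℝ} {s : Strategy} :
    IsNash T R P S a b s s ↔ ∀ s' : Strategy, subj T R P S a b s' s ≤ subj T R P S a b s s :=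
  and_self_iff

theorem isNash_C_C_iff {T R P S a b : ℝ} :
    IsNash T R P S a b C C ↔ a * (T - R) ≤ b * (R - S) := by
  rw [isNash_self_iff, Strategy.forall_strategy]
  simp only [subj, payoff, le_refl, true_and]
  constructor <;> intro h <;> linarith

theorem isNash_D_D_iff {T R P S a b : ℝ} :
    IsNash T R P S a b D D ↔ b * (T - P) ≤ a * (P - S) := by
  rw [isNash_self_iff, Strategy.forall_strategy]
  simp only [subj, payoff, le_refl, and_true]
  constructor <;> intro h <;> linarith

theorem isNash_C_C_iff_div_le {T R P S a f : ℝ} (ha : 0 < a) (hSR : S < R) :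
    IsNash T R P S a (a * f) C C ↔ (T - R) / (R - S) ≤ f := by
  rw [isNash_C_C_iff, mul_assoc, mul_le_mul_iff_right₀ ha, div_le_iff₀ (sub_pos.2 hSR)]

theorem isNash_D_D_iff_le_div {T R P S a f : ℝ} (ha : 0 < a) (hPT : P < T) :
    IsNash T R P S a (a * f) D D ↔ f ≤ (P - S) / (T - P) := by
  rw [isNash_D_D_iff, mul_assoc, mul_le_mul_iff_right₀ ha, le_div_iff₀ (sub_pos.2 hPT)]

theorem nonlinear_nash_iff_general (T R P S a w : ℝ) (F : ℝ → ℝ)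
    (hTR : T > R) (hRP : R > P) (hPS : P > S)
    (ha : a > 0) :
    (IsNash T R P S a (a * F w) Strategy.C Strategy.C ↔ F w ≥ (T - R) / (R - S)) ∧
    (IsNash T R P S a (a * F w) Strategy.D Strategy.D ↔ F w ≤ (P - S) / (T - P)) ∧
    ((IsNash T R P S a (a * F w) Strategy.C Strategy.C ∧
      IsNash T R P S a (a * F w) Strategy.D Strategy.D) ↔
      ((T - R) / (R - S) ≤ F w ∧ F w ≤ (P - S) / (T - P))) := by
  have hCC := isNash_C_C_iff_div_le (T := T) (P := P) (f := F w) ha (hPS.trans hRP)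
  have hDD := isNash_D_D_iff_le_div (R := R) (S := S) (f := F w) ha (hRP.trans hTR)
  exact ⟨hCC, hDD, and_congr hCC hDD⟩

/-- in the nonlinear generalization `u'_i = a·u_i + a·F(w)·u_j`,
with `F(0)=0`, `F` nondecreasing and `0 ≤ F(w) ≤ 1` on `w ≥ 0`:
(C,C) is a Nash equilibrium iff `F(w) ≥ w_min = (T−R)/(R−S)`,
(D,D) is a Nash equilibrium iff `F(w) ≤ w_max = (P−S)/(T−P)`,
hence both are Nash equilibria exactly when `w_min ≤ F(w) ≤ w_max`. -/
theorem nonlinear_nash_iff (T R P S a w : ℝ) (F : ℝ → ℝ)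
    (hTR : T > R) (hRP : R > P) (hPS : P > S)
    (ha : a > 0) (hw : w ≥ 0)
    (hF0 : F 0 = 0) (hFmono : Monotone F)
    (hFrange : ∀ v : ℝ, v ≥ 0 → 0 ≤ F v ∧ F v ≤ 1) :
    (IsNash T R P S a (a * F w) Strategy.C Strategy.C ↔ F w ≥ (T - R) / (R - S)) ∧
    (IsNash T R P S a (a * F w) Strategy.D Strategy.D ↔ F w ≤ (P - S) / (T - P)) ∧
    ((IsNash T R P S a (a * F w) Strategy.C Strategy.C ∧
      IsNash T R P S a (a * F w) Strategy.D Strategy.D) ↔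
      ((T - R) / (R - S) ≤ F w ∧ F w ≤ (P - S) / (T - P))) :=
  nonlinear_nash_iff_general T R P S a w F hTR hRP hPS ha
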